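/- arXiv:2103.04157 — 4 statements merged into one kernel-verified Lean document; each statement's English description precedes it below -/
import Mathlib

section
/- There exists a vector e = (e₁,…,e₈) ∈ ℝ⁸ such that the 45 real numbers 1, e_i (1 ≤ i ≤ 8), and e_i·e_j (1 ≤ i ≤ j ≤ 8) are linearly independent over ℚ, and such that |(e,e)| ≤ 1/2, where (e,e) = −eᵀCe is the value of the −E8 form on e. -/
/-! Take `x` transcendental (a Liouville number) and `eᵢ = x ^ 4 ^ (i + 1)`: then `1`, `eᵢ`, `eᵢ eⱼ`
are distinct powers of `x`, hence `ℚ`-linearly independent. Replacing `e` by `q • e` for a nonzero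
rational `q` multiplies the family termwise by units of `ℚ`, which preserves independence, and
multiplies `(e,e)` by `q²`, which can be made as small as we like. -/

open scoped BigOperators

/-- The Cartan matrix of E8 (Bourbaki numbering, 0-indexed): diagonal entries 2,
entry -1 exactly for the edges of the E8 Dynkin diagram. -/
def E8Cartan : Matrix (Fin 8) (Fin 8) ℤ :=
  !![ 2,  0, -1,  0,  0,  0,  0,  0;
      0,  2,  0, -1,  0,  0,  0,  0;
     -1,  0,  2, -1,  0,  0,  0,  0;
      0, -1, -1,  2, -1,  0,  0,  0;
      0,  0,  0, -1,  2, -1,  0,  0;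
      0,  0,  0,  0, -1,  2, -1,  0;
      0,  0,  0,  0,  0, -1,  2, -1;
      0,  0,  0,  0,  0,  0, -1,  2]

/-- Integer value `dᵀ C d'` of the E8 Cartan pairing. -/
def pairCZ (d d' : Fin 8 → ℤ) : ℤ := ∑ i, ∑ j, d i * E8Cartan i j * d' j

/-- Real value `wᵀ C w'` of the (real extension of the) E8 Cartan pairing. -/
def pairCR (w w' : Fin 8 → ℝ) : ℝ := ∑ i, ∑ j, w i * (E8Cartan i j : ℝ) * w' j

/-- The `−E8` pairing, real coefficients. -/
def innE8R (w w' : Fin 8 → ℝ) : ℝ := -pairCR w w'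

/-- The `−E8` pairing, integer coefficients. -/
def innE8Z (d d' : Fin 8 → ℤ) : ℤ := -pairCZ d d'

/-- The K3 lattice `L = ℤ⁶ ⊕ ℤ⁸ ⊕ ℤ⁸`. -/
abbrev LZ := (Fin 6 → ℤ) × (Fin 8 → ℤ) × (Fin 8 → ℤ)

/-- `L_ℝ = ℝ⁶ ⊕ ℝ⁸ ⊕ ℝ⁸`. -/
abbrev LR := (Fin 6 → ℝ) × (Fin 8 → ℝ) × (Fin 8 → ℝ)

/-- The K3 bilinear form `Q` (integer version).  Coordinates `0,…,5` of the first
factor are `u, v, x, y, z, t`; one has `Q(u,v) = Q(x,y) = Q(z,t) = 1`, all other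
pairings among `u,…,t` vanish, each `ℤ⁸` factor carries `−C`, and the three
factors are mutually orthogonal. -/
def QZ (d d' : LZ) : ℤ :=
  (d.1 0 * d'.1 1 + d.1 1 * d'.1 0 + d.1 2 * d'.1 3 + d.1 3 * d'.1 2
    + d.1 4 * d'.1 5 + d.1 5 * d'.1 4)
  - pairCZ d.2.1 d'.2.1 - pairCZ d.2.2 d'.2.2

/-- The K3 bilinear form `Q`, extended `ℝ`-bilinearly to `L_ℝ`. -/
def QR (w w' : LR) : ℝ :=
  (w.1 0 * w'.1 1 + w.1 1 * w'.1 0 + w.1 2 * w'.1 3 + w.1 3 * w'.1 2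
    + w.1 4 * w'.1 5 + w.1 5 * w'.1 4)
  - pairCR w.2.1 w'.2.1 - pairCR w.2.2 w'.2.2

/-- The inclusion `L → L_ℝ`. -/
def incl (d : LZ) : LR :=
  (fun i => (d.1 i : ℝ), fun i => (d.2.1 i : ℝ), fun i => (d.2.2 i : ℝ))

/-- The family of 45 real numbers `1`, `eᵢ` (`1 ≤ i ≤ 8`) and `eᵢ·eⱼ` (`1 ≤ i ≤ j ≤ 8`). -/
def fam45 (e : Fin 8 → ℝ) : Option (Fin 8 ⊕ {p : Fin 8 × Fin 8 // p.1 ≤ p.2}) → ℝ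
  | none => 1
  | some (Sum.inl i) => e i
  | some (Sum.inr p) => e p.1.1 * e p.1.2

open Filter Topology

theorem Transcendental.linearIndependent_pow {R A : Type*} [CommRing R] [CommRing A] [Algebra R A]
    {x : A} (hx : Transcendental R x) : LinearIndependent R (x ^ · : ℕ → A) := by
  simpa [Function.comp_def] using
    (Polynomial.basisMonomials R).linearIndependent.map' (Polynomial.aeval x).toLinearMap
      (LinearMap.ker_eq_bot.2 (transcendental_iff_injective.1 hx))

theorem transcendental_rat_liouvilleNumber {m : ℕ} (hm : 2 ≤ m) :
    Transcendental ℚ (liouvilleNumber m) := fun h =>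
  transcendental_liouvilleNumber hm ((IsFractionRing.isAlgebraic_iff ℤ ℚ ℝ).2 h)

theorem exists_rat_ne_zero_sq_mul_lt (a : ℝ) {ε : ℝ} (hε : 0 < ε) :
    ∃ q : ℚ, q ≠ 0 ∧ (q : ℝ) ^ 2 * a < ε := by
  have : Tendsto (fun n : ℕ => (1 / ((n : ℝ) + 1)) ^ 2 * a) atTop (𝓝 0) := by
    simpa using (tendsto_one_div_add_atTop_nhds_zero_nat.pow 2).mul_const a
  obtain ⟨n, hn⟩ := (this.eventually (gt_mem_nhds hε)).exists
  exact ⟨1 / (n + 1), by positivity, by push_cast; exact hn⟩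

theorem innE8R_smul (c d : ℝ) (w w' : Fin 8 → ℝ) :
    innE8R (c • w) (d • w') = c * d * innE8R w w' := by
  simp only [innE8R, pairCR, Pi.smul_apply, smul_eq_mul, mul_neg, Finset.mul_sum, neg_inj]
  exact Finset.sum_congr rfl fun i _ => Finset.sum_congr rfl fun j _ => by ring

abbrev Fam45Index := Option (Fin 8 ⊕ {p : Fin 8 × Fin 8 // p.1 ≤ p.2})

def fam45Degree : Fam45Index → ℕ
  | none => 0
  | some (Sum.inl _) => 1
  | some (Sum.inr _) => 2

theorem fam45_smul (c : ℝ) (e : Fin 8 → ℝ) (o : Fam45Index) :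
    fam45 (c • e) o = c ^ fam45Degree o * fam45 e o := by
  rcases o with _ | i | p <;> simp only [fam45, fam45Degree, Pi.smul_apply, smul_eq_mul] <;> ring

theorem linearIndependent_fam45_smul {e : Fin 8 → ℝ} (he : LinearIndependent ℚ (fam45 e))
    {q : ℚ} (hq : q ≠ 0) : LinearIndependent ℚ (fam45 ((q : ℝ) • e)) := by
  have : fam45 ((q : ℝ) • e) = (fun o => Units.mk0 q hq ^ fam45Degree o) • fam45 e := by
    funext o
    simp [fam45_smul, Units.smul_def, Rat.smul_def]
  exact this ▸ he.units_smul _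

def fam45Exponent : Fam45Index → ℕ
  | none => 0
  | some (Sum.inl i) => 4 ^ ((i : ℕ) + 1)
  | some (Sum.inr p) => 4 ^ ((p.1.1 : ℕ) + 1) + 4 ^ ((p.1.2 : ℕ) + 1)

-- A sum of at most two powers of `4` determines its base-`4` digits.
theorem fam45Exponent_injective : Function.Injective fam45Exponent := by decide

theorem fam45_pow_eq (x : ℝ) :
    fam45 (fun i => x ^ 4 ^ ((i : ℕ) + 1)) = (x ^ ·) ∘ fam45Exponent := by
  funext o
  rcases o with _ | i | p <;> simp [fam45, fam45Exponent, pow_add]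

theorem linearIndependent_fam45_pow {x : ℝ} (hx : Transcendental ℚ x) :
    LinearIndependent ℚ (fam45 fun i => x ^ 4 ^ ((i : ℕ) + 1)) :=
  fam45_pow_eq x ▸ hx.linearIndependent_pow.comp _ fam45Exponent_injective

/-- There exists `e ∈ ℝ⁸` such that the 45 numbers `1`, `eᵢ`, `eᵢ·eⱼ` (`i ≤ j`) are
linearly independent over `ℚ` and `|(e,e)| ≤ 1/2`, where `(e,e) = −eᵀCe`. -/
theorem statement0 :
    ∃ e : Fin 8 → ℝ, LinearIndependent ℚ (fam45 e) ∧ |innE8R e e| ≤ 1 / 2 := by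
  set e : Fin 8 → ℝ := fun i => liouvilleNumber 2 ^ 4 ^ ((i : ℕ) + 1)
  obtain ⟨q, hq, hsmall⟩ := exists_rat_ne_zero_sq_mul_lt |innE8R e e| (by norm_num : (0 : ℝ) < 1 / 2)
  refine ⟨(q : ℝ) • e, linearIndependent_fam45_smul ?_ hq, ?_⟩
  · exact linearIndependent_fam45_pow (transcendental_rat_liouvilleNumber le_rfl)
  · rw [innE8R_smul, ← sq, abs_mul, abs_sq]
    exact hsmall.le
end

section
/- The ℤ-linear map φ: L → L determined by u ↦ u, v ↦ v+y, x ↦ x−u, y ↦ y and the identity on z, t and on the two ℤ⁸ factors is an isometry of (L,Q), i.e. Q(φ(d),φ(d')) = Q(d,d') for all d,d' ∈ L; moreover its ℝ-linear extension satisfies φ(f₁(s)) = f₁(s+1), φ(f₂(s)) = f₂(s+1), and φ(f₃(s)) = f₃(s+1) for every s ∈ ℝ. -/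
open scoped BigOperators

/-- `φ` on the `ℤ⁶`/`ℝ⁶` factor: `u ↦ u`, `v ↦ v + y`, `x ↦ x − u`, `y ↦ y`,
`z ↦ z`, `t ↦ t` (in coordinates). -/
def phi6 {R : Type*} [Ring R] (w : Fin 6 → R) : Fin 6 → R :=
  ![w 0 - w 2, w 1, w 2, w 1 + w 3, w 4, w 5]

/-- `φ : L → L`, identity on the two `ℤ⁸` factors. -/
def phiZ (d : LZ) : LZ := (phi6 d.1, d.2.1, d.2.2)

/-- The `ℝ`-linear extension of `φ`. -/
def phiR (w : LR) : LR := (phi6 w.1, w.2.1, w.2.2)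

/-- `f₁(s) = 2u + v + s·y`. -/
def f1 (s : ℝ) : LR := (![2, 1, 0, s, 0, 0], 0, 0)

/-- `f₂(s) = x − s·u + 2y + a`, where `a = (0, e)`. -/
def f2 (e : Fin 8 → ℝ) (s : ℝ) : LR := (![-s, 0, 1, 2, 0, 0], 0, e)

/-- `f₃(s) = z + 2t + b`, where `b = (e, 0)`. -/
def f3 (e : Fin 8 → ℝ) (_ : ℝ) : LR := (![0, 0, 0, 0, 1, 2], e, 0)

theorem phi6_vec {R : Type*} [Ring R] (a b c d e f : R) :
    phi6 ![a, b, c, d, e, f] = ![a - c, b, c, b + d, e, f] :=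
  rfl

/-- `φ` is the Eichler transvection `w ↦ w + Q(w,u)·y − Q(w,y)·u` (note `Q(y,y) = Q(u,y) = 0`). -/
theorem QZ_phiZ (d d' : LZ) : QZ (phiZ d) (phiZ d') = QZ d d' := by
  simp only [QZ, phiZ, phi6, Matrix.cons_val]
  ring

theorem phiR_f1 (s : ℝ) : phiR (f1 s) = f1 (s + 1) := by
  simp [phiR, f1, phi6_vec, add_comm]

theorem phiR_f2 (e : Fin 8 → ℝ) (s : ℝ) : phiR (f2 e s) = f2 e (s + 1) := by
  simp only [phiR, f2, phi6_vec, zero_add, neg_add']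

theorem phiR_f3 (e : Fin 8 → ℝ) (s : ℝ) : phiR (f3 e s) = f3 e (s + 1) := by
  simp [phiR, f3, phi6_vec]

/-- `φ` is an isometry of `(L, Q)` and its `ℝ`-linear extension satisfies
`φ(fᵢ(s)) = fᵢ(s+1)` for `i = 1, 2, 3` and all `s ∈ ℝ`. -/
theorem statement5 (e : Fin 8 → ℝ) :
    (∀ d d' : LZ, QZ (phiZ d) (phiZ d') = QZ d d') ∧
    (∀ s : ℝ, phiR (f1 s) = f1 (s + 1) ∧ phiR (f2 e s) = f2 e (s + 1) ∧
      phiR (f3 e s) = f3 e (s + 1)) :=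
  ⟨QZ_phiZ, fun s => ⟨phiR_f1 s, phiR_f2 e s, phiR_f3 e s⟩⟩
end

section
/- Assume |(e,e)| ≤ 1/2, where (e,e) = −eᵀCe. Then for every s ∈ ℝ: Q(f₁(s),f₁(s)) = 4 > 0, Q(f₂(s),f₂(s)) = 4 + (e,e) > 0, Q(f₃(s),f₃(s)) = 4 + (e,e) > 0, and Q(f₂(s),f₃(s)) = Q(f₁(s),f₂(s)) = Q(f₁(s),f₃(s)) = 0. -/
open scoped BigOperators

lemma pairCR_zero_left (w : Fin 8 → ℝ) : pairCR 0 w = 0 := by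
  simp [pairCR]

lemma pairCR_zero_right (w : Fin 8 → ℝ) : pairCR w 0 = 0 := by
  simp [pairCR]

lemma QR_f1_self (s : ℝ) : QR (f1 s) (f1 s) = 4 := by
  simp only [QR, f1, Matrix.cons_val, Matrix.cons_val_zero, Matrix.cons_val_one, pairCR_zero_left]
  norm_num

lemma QR_f2_self (e : Fin 8 → ℝ) (s : ℝ) : QR (f2 e s) (f2 e s) = 4 + innE8R e e := by
  simp only [QR, f2, innE8R, Matrix.cons_val, Matrix.cons_val_zero, Matrix.cons_val_one,
    pairCR_zero_left]
  ring

lemma QR_f3_self (e : Fin 8 → ℝ) (s : ℝ) : QR (f3 e s) (f3 e s) = 4 + innE8R e e := by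
  simp only [QR, f3, innE8R, Matrix.cons_val, Matrix.cons_val_zero, Matrix.cons_val_one,
    pairCR_zero_left]
  ring

lemma QR_f2_f3 (e : Fin 8 → ℝ) (s : ℝ) : QR (f2 e s) (f3 e s) = 0 := by
  simp [QR, f2, f3, pairCR_zero_left, pairCR_zero_right]

lemma QR_f1_f2 (e : Fin 8 → ℝ) (s : ℝ) : QR (f1 s) (f2 e s) = 0 := by
  simp [QR, f1, f2, pairCR_zero_left]

lemma QR_f1_f3 (e : Fin 8 → ℝ) (s : ℝ) : QR (f1 s) (f3 e s) = 0 := by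
  simp [QR, f1, f3, pairCR_zero_left]

/-- If `|(e,e)| ≤ 1/2` then for every `s ∈ ℝ`: `Q(f₁,f₁) = 4 > 0`,
`Q(f₂,f₂) = Q(f₃,f₃) = 4 + (e,e) > 0`, and `Q(f₂,f₃) = Q(f₁,f₂) = Q(f₁,f₃) = 0`. -/
theorem statement6 (e : Fin 8 → ℝ) (he : |innE8R e e| ≤ 1 / 2) (s : ℝ) :
    (QR (f1 s) (f1 s) = 4 ∧ 0 < QR (f1 s) (f1 s)) ∧
    (QR (f2 e s) (f2 e s) = 4 + innE8R e e ∧ 0 < QR (f2 e s) (f2 e s)) ∧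
    (QR (f3 e s) (f3 e s) = 4 + innE8R e e ∧ 0 < QR (f3 e s) (f3 e s)) ∧
    QR (f2 e s) (f3 e s) = 0 ∧ QR (f1 s) (f2 e s) = 0 ∧ QR (f1 s) (f3 e s) = 0 := by
  have hpos : 0 < 4 + innE8R e e := by linarith [neg_abs_le (innE8R e e)]
  rw [QR_f1_self, QR_f2_self, QR_f3_self]
  exact ⟨⟨rfl, four_pos⟩, ⟨rfl, hpos⟩, ⟨rfl, hpos⟩, QR_f2_f3 e s, QR_f1_f2 e s, QR_f1_f3 e s⟩
end

section
/- Assume the 45 real numbers 1, e_i (1 ≤ i ≤ 8), and e_i·e_j (1 ≤ i ≤ j ≤ 8) are linearly independent over ℚ. Then for every s ∈ ℝ there is no d ∈ L with Q(d,d) = −2 and Q(d,f₁(s)) = Q(d,f₂(s)) = Q(d,f₃(s)) = 0. -/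
open scoped BigOperators

/-!
Write `d = (c, m, n)`, with `c₀, …, c₅` the coordinates along `u, v, x, y, z, t`. Each
condition `Q(d, fᵢ(s)) = 0` is a relation with integer coefficients among `1, s` and the `eⱼ`,
and `1, e₁, …, e₈` are independent over `ℤ`. So `Q(d, f₃) = 0` forces `mᵀC = 0` and
`c₅ = −2c₄`, while `c₁·Q(d, f₁) + c₂·Q(d, f₂)` no longer involves `s` and gives
`c₀c₁ + c₂c₃ = −2(c₁² + c₂²)`. Hence `2 = −Q(d, d) = 4(c₁² + c₂² + c₄²) + nᵀCn`, and as `C` is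
positive semidefinite, `c₁ = 0`. Then `Q(d, f₂) = 0` forces `nᵀC = 0`, leaving
`4(c₂² + c₄²) = 2`, which is impossible in `ℤ`.
-/

open Matrix

theorem pairCZ_eq_vecMul_dotProduct (n n' : Fin 8 → ℤ) :
    pairCZ n n' = (n ᵥ* E8Cartan) ⬝ᵥ n' := by
  simp only [pairCZ, vecMul, dotProduct, Finset.sum_mul]
  exact Finset.sum_comm

theorem pairCR_intCast_left (n : Fin 8 → ℤ) (w : Fin 8 → ℝ) :
    pairCR (fun i => (n i : ℝ)) w = ∑ j, ((n ᵥ* E8Cartan) j : ℝ) * w j := by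
  simp only [pairCR, vecMul, dotProduct, Int.cast_sum, Int.cast_mul, Finset.sum_mul]
  exact Finset.sum_comm

theorem four_mul_pairCZ_self (n : Fin 8 → ℤ) :
    4 * pairCZ n n =
      (n 0 + 2 * n 1 - 2 * n 2) ^ 2 + (-n 0 + 2 * n 1 + 2 * n 2 - 2 * n 3) ^ 2
      + (-n 0 + 2 * n 3 - 2 * n 4) ^ 2 + (-n 0 + 2 * n 4 - 2 * n 5) ^ 2
      + (-n 0 + 2 * n 5 - 2 * n 6) ^ 2 + (-n 0 + 2 * n 6 - 2 * n 7) ^ 2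
      + (-n 0 + 2 * n 7) ^ 2 + n 0 ^ 2 := by
  simp only [pairCZ, E8Cartan, Fin.sum_univ_eight, of_apply, cons_val', cons_val_fin_one,
    cons_val_zero, cons_val_one, cons_val]
  ring

theorem pairCZ_self_nonneg (n : Fin 8 → ℤ) : 0 ≤ pairCZ n n := by
  have h : 0 ≤ 4 * pairCZ n n := by rw [four_mul_pairCZ_self]; positivity
  linarith

theorem eq_zero_of_intCast_eq_sum {ι : Type*} [Fintype ι] {e : ι → ℝ}
    (he : LinearIndependent ℤ fun o : Option ι => o.elim 1 e) (q : ℤ) (c : ι → ℤ)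
    (h : (q : ℝ) = ∑ j, (c j : ℝ) * e j) : q = 0 ∧ c = 0 := by
  have hrel : ∑ o : Option ι, o.elim (-q) c • o.elim (1 : ℝ) e = 0 := by
    simp [Fintype.sum_option, h]
  have hg := Fintype.linearIndependent_iff.mp he _ hrel
  exact ⟨neg_eq_zero.mp (hg none), funext fun j => hg (some j)⟩

theorem linearIndependent_int_one_coords_of_fam45 (e : Fin 8 → ℝ)
    (he : LinearIndependent ℚ (fam45 e)) :
    LinearIndependent ℤ fun o : Option (Fin 8) => o.elim 1 e := by
  have h := he.comp (Option.map Sum.inl) (Option.map_injective Sum.inl_injective)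
  convert h.restrict_scalars' ℤ using 1
  funext o
  cases o <;> rfl

theorem QR_incl_f1 (c : Fin 6 → ℤ) (m n : Fin 8 → ℤ) (s : ℝ) :
    QR (incl (c, m, n)) (f1 s) = c 0 + 2 * c 1 + s * c 2 := by
  simp only [QR, incl, f1, pairCR_intCast_left, cons_val_zero, cons_val_one, cons_val,
    Pi.zero_apply, mul_zero, Finset.sum_const_zero]
  ring

theorem QR_incl_f2 (c : Fin 6 → ℤ) (m n : Fin 8 → ℤ) (e : Fin 8 → ℝ) (s : ℝ) :
    QR (incl (c, m, n)) (f2 e s) =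
      -s * c 1 + 2 * c 2 + c 3 - ∑ j, ((n ᵥ* E8Cartan) j : ℝ) * e j := by
  simp only [QR, incl, f2, pairCR_intCast_left, cons_val_zero, cons_val_one, cons_val,
    Pi.zero_apply, mul_zero, Finset.sum_const_zero]
  ring

theorem QR_incl_f3 (c : Fin 6 → ℤ) (m n : Fin 8 → ℤ) (e : Fin 8 → ℝ) (s : ℝ) :
    QR (incl (c, m, n)) (f3 e s) = 2 * c 4 + c 5 - ∑ j, ((m ᵥ* E8Cartan) j : ℝ) * e j := by
  simp only [QR, incl, f3, pairCR_intCast_left, cons_val_zero, cons_val_one, cons_val,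
    Pi.zero_apply, mul_zero, Finset.sum_const_zero]
  ring

/-- If the 45 numbers `1`, `eᵢ`, `eᵢ·eⱼ` are linearly independent over `ℚ`, then
for every `s ∈ ℝ` there is no `d ∈ L` with `Q(d,d) = −2` and
`Q(d,f₁(s)) = Q(d,f₂(s)) = Q(d,f₃(s)) = 0`. -/
theorem statement7 (e : Fin 8 → ℝ) (he : LinearIndependent ℚ (fam45 e)) (s : ℝ) :
    ¬ ∃ d : LZ, QZ d d = -2 ∧ QR (incl d) (f1 s) = 0 ∧
      QR (incl d) (f2 e s) = 0 ∧ QR (incl d) (f3 e s) = 0 := by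
  rintro ⟨⟨c, m, n⟩, hd, h1, h2, h3⟩
  rw [QR_incl_f1] at h1
  rw [QR_incl_f2] at h2
  rw [QR_incl_f3] at h3
  have hli := linearIndependent_int_one_coords_of_fam45 e he
  obtain ⟨h45, hm⟩ := eq_zero_of_intCast_eq_sum hli (2 * c 4 + c 5)
    (m ᵥ* E8Cartan) (by push_cast; linarith)
  obtain ⟨hquad, -⟩ := eq_zero_of_intCast_eq_sum hli
    (c 0 * c 1 + 2 * c 1 ^ 2 + 2 * c 2 ^ 2 + c 2 * c 3) (c 2 • (n ᵥ* E8Cartan))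
    (by
      simp only [Pi.smul_apply, smul_eq_mul, Int.cast_mul, mul_assoc, ← Finset.mul_sum]
      push_cast
      linear_combination (c 1 : ℝ) * h1 + (c 2 : ℝ) * h2)
  have hQ : 4 * (c 1 ^ 2 + c 2 ^ 2 + c 4 ^ 2) + pairCZ n n = 2 := by
    rw [QZ, pairCZ_eq_vecMul_dotProduct m, hm, zero_dotProduct] at hd
    linear_combination -hd + 2 * hquad + 2 * c 4 * h45
  have hc1 : c 1 = 0 := by nlinarith [pairCZ_self_nonneg n, sq_nonneg (c 2), sq_nonneg (c 4)]
  obtain ⟨-, hn⟩ := eq_zero_of_intCast_eq_sum hli (2 * c 2 + c 3)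
    (n ᵥ* E8Cartan) (by rw [hc1] at h2; push_cast at h2 ⊢; linarith)
  rw [pairCZ_eq_vecMul_dotProduct, hn, zero_dotProduct] at hQ
  omega
end
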